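/- arXiv:1207.6447 — 3 statements merged into one kernel-verified Lean document; each statement's English description precedes it below -/
import Mathlib

section
/- If G is a simple graph on n ≥ 3 vertices such that d(u)+d(v) ≥ n for every pair of nonadjacent vertices u, v, then G contains a Hamiltonian cycle. -/
/-!
Add missing edges one at a time; Ore's condition survives, and the complete graph is
Hamiltonian. Going back from `G ⊔ edge u v` to `G` (Bondy–Chvátal): a Hamiltonian cycle through
`uv` leaves a Hamiltonian path `u = x₀, …, xₙ₋₁ = v` in `G`. Among its `n - 1` consecutive pairs,
`deg v` have `xᵢ ∼ v` and `deg u` have `xᵢ₊₁ ∼ u`; as `deg u + deg v ≥ n`, some pair has both,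
and `u, xᵢ₊₁, …, v, xᵢ, …, x₁, u` is a Hamiltonian cycle of `G`.
-/

open Finset

theorem List.exists_mem_and_of_length_lt_countP_add_countP {α : Type*} {p q : α → Bool} :
    ∀ {l : List α}, l.length < l.countP p + l.countP q → ∃ x ∈ l, p x ∧ q x
  | [], h => by simp at h
  | a :: l, h => by
    by_cases ha : p a ∧ q a
    · exact ⟨a, mem_cons_self, ha⟩
    · have hl : l.length < l.countP p + l.countP q := by
        simp only [countP_cons, length_cons] at h
        split_ifs at h <;> simp_all <;> omega
      obtain ⟨x, hx, hpq⟩ := exists_mem_and_of_length_lt_countP_add_countP hl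
      exact ⟨x, mem_cons_of_mem a hx, hpq⟩

namespace SimpleGraph

variable {V : Type*} {G : SimpleGraph V}

def OreCondition [Fintype V] (G : SimpleGraph V) [DecidableRel G.Adj] : Prop :=
  ∀ u v, u ≠ v → ¬ G.Adj u v → Fintype.card V ≤ G.degree u + G.degree v

lemma OreCondition.mono [Fintype V] {H : SimpleGraph V} [DecidableRel G.Adj]
    [DecidableRel H.Adj] (hG : G.OreCondition) (hle : G ≤ H) : H.OreCondition :=
  fun u v huv hadj => (hG u v huv fun h => hadj (hle h)).trans
    (add_le_add (degree_le_of_le hle) (degree_le_of_le hle))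

lemma mem_edgeSet_of_mem_edgeSet_sup_edge {u v : V} {e : Sym2 V}
    (he : e ∈ (G ⊔ edge u v).edgeSet) (hne : e ≠ s(u, v)) : e ∈ G.edgeSet := by
  rw [edgeSet_sup, edgeSet_edge] at he
  aesop

variable [DecidableEq V]

namespace Walk

variable {u v : V}

lemma IsHamiltonian.countP_adj_support [Fintype V] [DecidableRel G.Adj] {p : G.Walk u v}
    (hp : p.IsHamiltonian) (w : V) : p.support.countP (G.Adj w ·) = G.degree w := by
  rw [List.countP_eq_length_filter, ← List.toFinset_card_of_nodup
    (hp.isPath.support_nodup.filter _), List.toFinset_filter, hp.toFinset_support,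
    ← card_neighborFinset_eq_degree, neighborFinset_eq_filter]
  simp

lemma IsHamiltonian.exists_mem_darts_adj [Fintype V] [DecidableRel G.Adj] {p : G.Walk u v}
    (hp : p.IsHamiltonian) (hdeg : Fintype.card V ≤ G.degree u + G.degree v) :
    ∃ d ∈ p.darts, G.Adj v d.fst ∧ G.Adj u d.snd := by
  have hfst : p.darts.countP (G.Adj v ·.fst) = G.degree v := by
    have := congrArg (List.countP (G.Adj v ·)) p.map_fst_darts_append
    rw [List.countP_append, List.countP_map, hp.countP_adj_support] at this
    simpa [Function.comp_def] using this
  have hsnd : p.darts.countP (G.Adj u ·.snd) = G.degree u := by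
    have := congrArg (List.countP (G.Adj u ·)) p.cons_tail_support
    rw [List.countP_cons, ← p.map_snd_darts, List.countP_map, hp.countP_adj_support] at this
    simpa [Function.comp_def] using this
  have hlen : p.darts.length + 1 = Fintype.card V := by
    have : 0 < Fintype.card V := Fintype.card_pos_iff.mpr ⟨u⟩
    rw [length_darts, hp.length_eq]
    omega
  simpa using List.exists_mem_and_of_length_lt_countP_add_countP (p := (G.Adj v ·.fst))
    (q := (G.Adj u ·.snd)) (l := p.darts) (by omega)

lemma IsHamiltonian.isHamiltonianCycle_cons [Fintype V] {p : G.Walk u v} (hp : p.IsHamiltonian)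
    (h : G.Adj v u) (h3 : 3 ≤ Fintype.card V) : (cons h p).IsHamiltonianCycle := by
  rw [isHamiltonianCycle_iff_isCycle_and_length_eq, isCycle_iff_isPath_tail_and_le_length]
  simp only [tail_cons, length_cons, hp.length_eq]
  exact ⟨⟨(isPath_copy _ _ _).mpr hp.isPath, by omega⟩, by omega⟩

lemma IsHamiltonian.of_perm {u' v' : V} {p : G.Walk u v} {q : G.Walk u' v'}
    (hp : p.IsHamiltonian) (h : q.support.Perm p.support) : q.IsHamiltonian :=
  fun x => (h.count_eq x).trans (hp x)

theorem IsHamiltonian.exists_isHamiltonianCycle_of_card_le_degree_add_degree [Fintype V] [DecidableRel G.Adj]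
    {p : G.Walk u v} (hp : p.IsHamiltonian) (h3 : 3 ≤ Fintype.card V)
    (hdeg : Fintype.card V ≤ G.degree u + G.degree v) :
    ∃ (w : V) (c : G.Walk w w), c.IsHamiltonianCycle := by
  obtain ⟨d, hd, hvd, hud⟩ := hp.exists_mem_darts_adj hdeg
  obtain ⟨q₁, q₂, rfl⟩ := (isSubwalk_toWalk_adj_iff_mem_darts p).mpr hd
  refine ⟨u, cons hud (q₂.append (cons hvd q₁.reverse)), ?_⟩
  refine IsHamiltonian.isHamiltonianCycle_cons (hp.of_perm ?_) hud h3
  simpa [support_append] using ((List.reverse_perm _).append_left _).trans List.perm_append_comm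

lemma IsHamiltonian.transfer {H : SimpleGraph V} {p : G.Walk u v} (hp : p.IsHamiltonian)
    (hpH : ∀ e ∈ p.edges, e ∈ H.edgeSet) : (p.transfer H hpH).IsHamiltonian := by
  simpa [IsHamiltonian, support_transfer] using hp

lemma IsHamiltonianCycle.transfer {H : SimpleGraph V} {a : V} {c : G.Walk a a}
    (hc : c.IsHamiltonianCycle) (hcH : ∀ e ∈ c.edges, e ∈ H.edgeSet) :
    (c.transfer H hcH).IsHamiltonianCycle := by
  rw [isHamiltonianCycle_iff_isCycle_and_support_count_tail_eq_one] at hc ⊢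
  simpa [support_transfer] using ⟨hc.1.transfer hcH, hc.2⟩

lemma IsHamiltonianCycle.exists_isHamiltonian_of_mem_darts {a : V} {c : G.Walk a a}
    (hc : c.IsHamiltonianCycle) {d : G.Dart} (hd : d ∈ c.darts) :
    ∃ p : G.Walk d.snd d.fst, p.IsHamiltonian ∧ d.edge ∉ p.edges := by
  obtain ⟨q₁, q₂, rfl⟩ := (isSubwalk_toWalk_adj_iff_mem_darts c).mpr hd
  refine ⟨q₂.append q₁, fun x => ?_, ?_⟩
  · rw [isHamiltonianCycle_iff_isCycle_and_support_count_tail_eq_one] at hc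
    have := hc.2 x
    simpa [support_append, add_comm] using this
  · have hnd : (q₁.edges ++ d.edge :: q₂.edges).Nodup := by
      simpa [edges_append, Dart.edge] using hc.edges_nodup
    simpa [edges_append, or_comm] using (List.nodup_cons.mp (List.nodup_middle.mp hnd)).1

end Walk
open Walk

theorem exists_isHamiltonianCycle_of_sup_edge [Fintype V] [DecidableRel G.Adj] {u v : V}
    (h3 : 3 ≤ Fintype.card V) (hdeg : Fintype.card V ≤ G.degree u + G.degree v) {a : V}
    {c : (G ⊔ edge u v).Walk a a} (hc : c.IsHamiltonianCycle) :
    ∃ (w : V) (c : G.Walk w w), c.IsHamiltonianCycle := by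
  by_cases he : s(u, v) ∈ c.edges
  · obtain ⟨d, hd, hde⟩ := List.mem_map.mp he
    obtain ⟨p, hp, hpe⟩ := hc.exists_isHamiltonian_of_mem_darts hd
    have hpG : ∀ e ∈ p.edges, e ∈ G.edgeSet := fun e he' =>
      mem_edgeSet_of_mem_edgeSet_sup_edge (p.edges_subset_edgeSet he')
        (hde ▸ ne_of_mem_of_not_mem he' hpe)
    refine (hp.transfer hpG).exists_isHamiltonianCycle_of_card_le_degree_add_degree h3 ?_
    rcases Sym2.eq_iff.mp hde with ⟨h1, h2⟩ | ⟨h1, h2⟩ <;> rw [h1, h2] <;> omega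
  · have hcG : ∀ e ∈ c.edges, e ∈ G.edgeSet := fun e he' =>
      mem_edgeSet_of_mem_edgeSet_sup_edge (c.edges_subset_edgeSet he')
        (ne_of_mem_of_not_mem he' he)
    exact ⟨a, c.transfer G hcG, hc.transfer hcG⟩

lemma exists_isHamiltonian_top [Fintype V] [Nonempty V] :
    ∃ (u v : V) (p : (⊤ : SimpleGraph V).Walk u v), p.IsHamiltonian := by
  have hne : (univ : Finset V).toList ≠ [] := by simpa using univ_nonempty.ne_empty
  refine ⟨_, _, Walk.ofSupport _ hne (nodup_toList univ).isChain, fun x => ?_⟩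
  simpa using List.count_eq_one_of_mem (nodup_toList univ) (mem_toList.mpr (mem_univ x))

lemma exists_isHamiltonianCycle_top [Fintype V] (h3 : 3 ≤ Fintype.card V) :
    ∃ (u : V) (c : (⊤ : SimpleGraph V).Walk u u), c.IsHamiltonianCycle := by
  have : Nonempty V := Fintype.card_pos_iff.mp (by omega)
  obtain ⟨u, v, p, hp⟩ := exists_isHamiltonian_top (V := V)
  refine hp.exists_isHamiltonianCycle_of_card_le_degree_add_degree h3 ?_
  simp only [← completeGraph_eq_top, complete_graph_degree]
  omega

theorem OreCondition.exists_isHamiltonianCycle [Fintype V] [DecidableRel G.Adj]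
    (hG : G.OreCondition) (h3 : 3 ≤ Fintype.card V) :
    ∃ (u : V) (c : G.Walk u u), c.IsHamiltonianCycle := by
  revert hG ‹DecidableRel G.Adj›
  induction G using WellFoundedGT.induction with
  | ind G ih =>
  intro _ hG
  by_cases htop : G = ⊤
  · exact htop ▸ exists_isHamiltonianCycle_top h3
  · obtain ⟨u, v, huv, hadj⟩ : ∃ u v, u ≠ v ∧ ¬ G.Adj u v := by
      by_contra! h
      exact htop (eq_top_iff.mpr fun u v huv => h u v huv)
    classical
    obtain ⟨a, c, hc⟩ := ih _ (lt_sup_edge G u v huv hadj) (hG.mono le_sup_left)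
    exact exists_isHamiltonianCycle_of_sup_edge h3 (hG u v huv hadj) hc

end SimpleGraph

/-- Ore: if n ≥ 3 and d(u)+d(v) ≥ n for every pair of nonadjacent vertices,
G has a Hamiltonian cycle. -/
theorem ore_hamiltonian_cycle (n : ℕ) (hn : 3 ≤ n) (G : SimpleGraph (Fin n))
    [DecidableRel G.Adj]
    (h : ∀ u v : Fin n, u ≠ v → ¬ G.Adj u v → n ≤ G.degree u + G.degree v) :
    ∃ (u : Fin n) (c : G.Walk u u), c.IsHamiltonianCycle :=
  SimpleGraph.OreCondition.exists_isHamiltonianCycle (by simpa [SimpleGraph.OreCondition] using h)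
    (by simpa using hn)
end

section
/- A graph G of order n is Hamilton-connected if and only if its (n+1)-closure C_{n+1}(G) is Hamilton-connected. -/
/-!
Adding edges preserves Hamilton-connectedness, so only the converse needs an argument, and it
suffices to undo a single closure step `G ↦ G + uv` with `deg u + deg v ≥ n + 1`. Take a
Hamiltonian `x`–`y` path `v₀ v₁ … v_{n-1}` of `G + uv` that uses `uv = vₐvₐ₊₁`. The index sets
`{i + 1 | vᵢ ~ u}` and `{i | vᵢ ~ v}` lie in `{0, …, n} \ {a + 1}` and have total size `> n`,
so some `vⱼ ~ u` with `vⱼ₊₁ ~ v`. Reversing the segment of the path between the edges `vₐvₐ₊₁`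
and `vⱼvⱼ₊₁` replaces them by `uvⱼ` and `vvⱼ₊₁`, giving a Hamiltonian `x`–`y` path in `G`.
-/

open scoped Classical

/-- One step of forming the k-closure: join a pair of nonadjacent vertices
whose degree sum is at least k. -/
def ClosureStep {V : Type*} [Fintype V] (k : ℕ) (G H : SimpleGraph V) : Prop :=
  ∃ u v : V, u ≠ v ∧ ¬ G.Adj u v ∧ k ≤ G.degree u + G.degree v ∧
    H = G ⊔ SimpleGraph.edge u v

/-- `H` is a k-closure of `G`: obtained from `G` by successively joining pairs of
nonadjacent vertices of degree sum at least `k`, until no such pair remains. -/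
def IsKClosure {V : Type*} [Fintype V] (k : ℕ) (G H : SimpleGraph V) : Prop :=
  Relation.ReflTransGen (ClosureStep k) G H ∧ ∀ H', ¬ ClosureStep k H H'

namespace List

variable {α : Type*}

theorem exists_getElem_mem_getElem_succ_mem [DecidableEq α] {l : List α} {s t : Finset α}
    (hs : ∀ x ∈ s, x ∈ l) (ht : ∀ x ∈ t, x ∈ l) {a : ℕ} (ha : a + 1 < l.length)
    (has : l[a] ∉ s) (hat : l[a + 1] ∉ t) (hcard : l.length < s.card + t.card) :
    ∃ j, ∃ hj : j + 1 < l.length, l[j] ∈ s ∧ l[j + 1] ∈ t := by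
  have hidx {x} (hx : x ∈ l) : l[l.idxOf x]'(idxOf_lt_length_iff.2 hx) = x := getElem_idxOf _
  have hinj {u : Finset α} (hu : ∀ x ∈ u, x ∈ l) : Set.InjOn (l.idxOf ·) u :=
    fun x hx _ _ hxy => (idxOf_inj (hu x hx)).1 hxy
  set P := (Finset.range (l.length + 1)).erase (a + 1)
  have hsP : s.image (l.idxOf · + 1) ⊆ P := by
    intro m hm
    simp only [Finset.mem_image] at hm
    obtain ⟨x, hx, rfl⟩ := hm
    have hlt := idxOf_lt_length_iff.2 (hs x hx)
    simp only [P, Finset.mem_erase, Finset.mem_range]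
    refine ⟨fun h => has ?_, by omega⟩
    rwa [getElem_congr_idx (Nat.succ_injective h).symm, hidx (hs x hx)]
  have htP : t.image (l.idxOf ·) ⊆ P := by
    intro m hm
    simp only [Finset.mem_image] at hm
    obtain ⟨x, hx, rfl⟩ := hm
    have hlt := idxOf_lt_length_iff.2 (ht x hx)
    simp only [P, Finset.mem_erase, Finset.mem_range]
    refine ⟨fun h => hat ?_, by omega⟩
    rwa [getElem_congr_idx h.symm, hidx (ht x hx)]
  have hPcard : P.card < (s.image (l.idxOf · + 1)).card + (t.image (l.idxOf ·)).card := by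
    rw [Finset.card_image_of_injOn, Finset.card_image_of_injOn (hinj ht),
      Finset.card_erase_of_mem (by simp; omega), Finset.card_range]
    · simpa using hcard
    · exact fun x hx y hy hxy => hinj hs hx hy (Nat.succ_injective hxy)
  obtain ⟨m, hm⟩ := Finset.inter_nonempty_of_card_lt_card_add_card hsP htP hPcard
  simp only [Finset.mem_inter, Finset.mem_image] at hm
  obtain ⟨⟨w, hw, rfl⟩, w', hw', hww'⟩ := hm
  have hlt : l.idxOf w' < l.length := idxOf_lt_length_iff.2 (ht w' hw')
  refine ⟨l.idxOf w, by omega, by rwa [hidx (hs w hw)], ?_⟩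
  rwa [getElem_congr_idx hww'.symm, hidx (ht w' hw')]

variable {R : α → α → Prop}

theorem IsChain.append_reverse_append (hR : ∀ a b, R a b → R b a) {A S B : List α}
    (hA : A.IsChain R) (hS : S.IsChain R) (hB : B.IsChain R) (hS₀ : S ≠ [])
    (hAS : ∀ x ∈ A.getLast?, ∀ y ∈ S.getLast?, R x y)
    (hSB : ∀ x ∈ S.head?, ∀ y ∈ B.head?, R x y) :
    (A ++ S.reverse ++ B).IsChain R := by
  refine (hA.append (isChain_reverse.2 (hS.imp fun _ _ h => hR _ _ h)) ?_).append hB ?_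
  · rwa [head?_reverse]
  · rwa [getLast?_append_of_ne_nil _ (reverse_ne_nil_iff.2 hS₀), getLast?_reverse]

theorem exists_perm_isChain_reverse_segment (hR : ∀ a b, R a b → R b a) {l : List α}
    {i j : ℕ} (hij : i < j) (hj : j + 1 < l.length)
    (hl : ∀ k (hk : k + 1 < l.length), k ≠ i → k ≠ j → R l[k] l[k + 1])
    (hi' : R l[i] l[j]) (hj' : R l[i + 1] l[j + 1]) :
    ∃ l' : List α, l'.Perm l ∧ l'.IsChain R ∧ l'.head? = l.head? ∧ l'.getLast? = l.getLast? := by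
  have hB : l.drop (j + 1) = (l.drop (i + 1)).drop (j - i) := by
    rw [drop_drop]; congr 1; omega
  have hl_eq : l = l.take (i + 1) ++ (l.drop (i + 1)).take (j - i) ++ l.drop (j + 1) := by
    rw [append_assoc, hB, take_append_drop, take_append_drop]
  have hA : (l.take (i + 1)).getLast? = some l[i] := by
    rw [getLast?_eq_getElem?]; simp [show min (i + 1) l.length - 1 = i by omega]
  have hS : ((l.drop (i + 1)).take (j - i)).getLast? = some l[j] := by
    rw [getLast?_eq_getElem?]
    simp [getElem?_take, show min (j - i) (l.length - (i + 1)) - 1 = j - i - 1 by omega,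
      show i + 1 + (j - i - 1) = j by omega]
    omega
  have hS' : ((l.drop (i + 1)).take (j - i)).head? = some l[i + 1] := by
    simp [head?_take]; omega
  have hB' : (l.drop (j + 1)).head? = some l[j + 1] := by simp
  refine ⟨l.take (i + 1) ++ ((l.drop (i + 1)).take (j - i)).reverse ++ l.drop (j + 1),
    ?_, ?_, ?_, ?_⟩
  · conv_rhs => rw [hl_eq]
    exact ((reverse_perm _).append_left _).append_right _
  · refine IsChain.append_reverse_append hR ?_ ?_ ?_ ?_ ?_ ?_
    · refine isChain_iff_getElem.2 fun k hk => ?_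
      simp only [length_take] at hk
      simpa using hl k (by omega) (by omega) (by omega)
    · refine isChain_iff_getElem.2 fun k hk => ?_
      simp only [length_take, length_drop] at hk
      simpa [Nat.add_assoc] using hl (i + 1 + k) (by omega) (by omega) (by omega)
    · refine isChain_iff_getElem.2 fun k hk => ?_
      simp only [length_drop] at hk
      simpa [Nat.add_assoc] using hl (j + 1 + k) (by omega) (by omega) (by omega)
    · simp; omega
    · simpa [hA, hS] using hi'
    · simpa [hS', hB'] using hj'
  · rw [append_assoc, head?_append_of_ne_nil _ (ne_nil_of_length_pos (by simp; omega)),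
      head?_take, if_neg (by omega)]
  · rw [getLast?_append_of_ne_nil _ (by simp; omega), getLast?_drop, if_neg (by omega)]

end List

namespace SimpleGraph

variable {V : Type*} [DecidableEq V] {G H : SimpleGraph V}

theorem Walk.exists_isHamiltonian_of_isChain {x y : V} {l : List V}
    (hch : l.IsChain G.Adj) (hcount : ∀ w, l.count w = 1) (hx : l.head? = some x)
    (hy : l.getLast? = some y) : ∃ q : G.Walk x y, q.IsHamiltonian := by
  have hne : l ≠ [] := by rintro rfl; simp at hx
  refine ⟨(Walk.ofSupport l hne hch).copy ((List.head_eq_iff_head?_eq_some hne).2 hx)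
    ((List.getLast_eq_iff_getLast?_eq_some hne).2 hy), fun w => ?_⟩
  rw [support_copy, support_ofSupport, hcount]

def IsHamiltonConnected (G : SimpleGraph V) : Prop :=
  ∀ u v, u ≠ v → ∃ p : G.Walk u v, p.IsHamiltonian

theorem IsHamiltonConnected.mono (hGH : G ≤ H) (hG : G.IsHamiltonConnected) :
    H.IsHamiltonConnected := fun u v huv =>
  let ⟨p, hp⟩ := hG u v huv
  ⟨p.mapLe hGH, hp.map _ Function.bijective_id⟩

variable [Fintype V]

theorem exists_perm_isChain_of_card_lt_degree_add_degree {l : List V} (hnd : l.Nodup)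
    (hcov : ∀ w, w ∈ l) {a : ℕ} (ha : a + 1 < l.length) (hna : ¬ G.Adj l[a] l[a + 1])
    (hdeg : Fintype.card V < G.degree l[a] + G.degree l[a + 1])
    (hl : ∀ k (hk : k + 1 < l.length), k ≠ a → G.Adj l[k] l[k + 1]) :
    ∃ l' : List V, l'.Perm l ∧ l'.IsChain G.Adj ∧ l'.head? = l.head? ∧
      l'.getLast? = l.getLast? := by
  obtain ⟨j, hj, hju, hjv⟩ := List.exists_getElem_mem_getElem_succ_mem
    (fun x _ => hcov x) (fun x _ => hcov x) ha (G.notMem_neighborFinset_self _)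
    (G.notMem_neighborFinset_self _)
    (by simpa only [card_neighborFinset_eq_degree] using hnd.length_le_card.trans_lt hdeg)
  rw [mem_neighborFinset] at hju hjv
  have hja : j ≠ a := by rintro rfl; exact G.irrefl hju
  have hja₁ : j ≠ a + 1 := fun h => hna (by rwa [getElem_congr_idx h] at hju)
  have hja₂ : j + 1 ≠ a := fun h => hna (by rw [getElem_congr_idx h] at hjv; exact hjv.symm)
  rcases lt_or_gt_of_ne hja with hlt | hgt
  · exact List.exists_perm_isChain_reverse_segment (fun _ _ h => h.symm) (by omega : j < a) ha
      (fun k hk _ hka => hl k hk hka) hju.symm hjv.symm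
  · exact List.exists_perm_isChain_reverse_segment (fun _ _ h => h.symm) (by omega : a < j) hj
      (fun k hk hka _ => hl k hk hka) hju hjv

theorem exists_perm_isChain_of_isChain_sup_edge {u v : V}
    (hdeg : Fintype.card V < G.degree u + G.degree v) {l : List V} (hnd : l.Nodup)
    (hcov : ∀ w, w ∈ l) (hl : l.IsChain (G ⊔ edge u v).Adj) :
    ∃ l' : List V, l'.Perm l ∧ l'.IsChain G.Adj ∧ l'.head? = l.head? ∧
      l'.getLast? = l.getLast? := by
  by_cases hG : l.IsChain G.Adj
  · exact ⟨l, List.Perm.refl l, hG, rfl, rfl⟩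
  rw [List.isChain_iff_getElem] at hl hG
  push Not at hG
  obtain ⟨a, ha, hna⟩ := hG
  have hedge {k} (hk : k + 1 < l.length) (hGk : ¬ G.Adj l[k] l[k + 1]) :
      l[k] = u ∧ l[k + 1] = v ∨ l[k] = v ∧ l[k + 1] = u :=
    ((edge_adj _ _ _ _).1 ((hl k hk).resolve_left hGk)).1
  -- `l` is `Nodup`, so it uses the edge `uv` only once
  have hother (k) (hk : k + 1 < l.length) (hka : k ≠ a) : G.Adj l[k] l[k + 1] := by
    by_contra hGk
    have key : l[k] = l[a] ∨ l[k] = l[a + 1] ∧ l[k + 1] = l[a] := by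
      rcases hedge hk hGk with ⟨h₁, h₂⟩ | ⟨h₁, h₂⟩ <;>
        rcases hedge ha hna with ⟨h₃, h₄⟩ | ⟨h₃, h₄⟩
      all_goals first
        | exact Or.inl (h₁.trans h₃.symm)
        | exact Or.inr ⟨h₁.trans h₄.symm, h₂.trans h₃.symm⟩
    simp only [hnd.getElem_inj_iff] at key
    omega
  rcases hedge ha hna with ⟨hu, hv⟩ | ⟨hv, hu⟩
  · exact exists_perm_isChain_of_card_lt_degree_add_degree hnd hcov ha hna
      (by rwa [hu, hv]) hother
  · exact exists_perm_isChain_of_card_lt_degree_add_degree hnd hcov ha hna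
      (by rwa [hu, hv, add_comm]) hother

theorem Walk.IsHamiltonian.exists_of_sup_edge {u v x y : V}
    (hdeg : Fintype.card V < G.degree u + G.degree v) {p : (G ⊔ edge u v).Walk x y}
    (hp : p.IsHamiltonian) : ∃ q : G.Walk x y, q.IsHamiltonian := by
  obtain ⟨l, hperm, hch, hx, hy⟩ := exists_perm_isChain_of_isChain_sup_edge hdeg
    hp.isPath.support_nodup hp.mem_support p.isChain_adj_support
  refine exists_isHamiltonian_of_isChain hch (fun w => (hperm.count_eq w).trans (hp w)) ?_ ?_
  · rw [hx, List.head?_eq_some_head p.support_ne_nil, p.head_support]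
  · rw [hy, List.getLast?_eq_some_getLast p.support_ne_nil, p.getLast_support]

theorem IsHamiltonConnected.of_sup_edge {u v : V}
    (hdeg : Fintype.card V < G.degree u + G.degree v)
    (h : (G ⊔ edge u v).IsHamiltonConnected) : G.IsHamiltonConnected := fun x y hxy =>
  let ⟨_, hp⟩ := h x y hxy
  hp.exists_of_sup_edge hdeg

end SimpleGraph

open SimpleGraph

section

variable {V : Type*} [Fintype V] [DecidableEq V] {G H : SimpleGraph V}

theorem ClosureStep.isHamiltonConnected_iff {k : ℕ} (hk : Fintype.card V < k)
    (h : ClosureStep k G H) : G.IsHamiltonConnected ↔ H.IsHamiltonConnected := by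
  obtain ⟨u, v, -, -, hdeg, rfl⟩ := h
  exact ⟨IsHamiltonConnected.mono le_sup_left, IsHamiltonConnected.of_sup_edge (hk.trans_le hdeg)⟩

theorem isHamiltonConnected_iff_of_reflTransGen_closureStep {k : ℕ}
    (hk : Fintype.card V < k) (h : Relation.ReflTransGen (ClosureStep k) G H) :
    G.IsHamiltonConnected ↔ H.IsHamiltonConnected := by
  induction h with
  | refl => rfl
  | tail _ hstep ih => exact ih.trans (ClosureStep.isHamiltonConnected_iff hk hstep)

end

/-- A graph G of order n is Hamilton-connected iff its (n+1)-closure is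
Hamilton-connected. -/
theorem hamilton_connected_iff_closure (n : ℕ) (G H : SimpleGraph (Fin n))
    (hH : IsKClosure (n + 1) G H) :
    (∀ u v : Fin n, u ≠ v → ∃ p : G.Walk u v, p.IsHamiltonian) ↔
      (∀ u v : Fin n, u ≠ v → ∃ p : H.Walk u v, p.IsHamiltonian) :=
  isHamiltonConnected_iff_of_reflTransGen_closureStep (by simp) hH.1
end

section
/- Let G be a graph of order n ≥ 2 with m edges. Then the signless Laplacian spectral radius satisfies γ(G) ≤ 2m/(n-1) + n - 2. -/
/-!
Collatz–Wielandt bound: if `Q` has nonnegative entries and `Q t ≤ r t` entrywise for a positive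
vector `t`, then every real eigenvalue of `Q` has absolute value at most `r` (compare `|f|` with
`t` at a vertex where `|f i| / t i` is maximal). For the signless Laplacian take
`t v = d(v) + ε`: then `(Q t)(u) = d(u)² + ∑_{w ∼ u} d(w) + 2ε d(u)`, so it suffices to bound
`d(u)² + ∑_{w ∼ u} d(w) ≤ (2m/(n-1) + n - 2) d(u)`. Splitting the vertices into `u`, its `d`
neighbours and its `k = n - 1 - d` non-neighbours, with `B` edges between the last two classes,
one has `∑_{w ∼ u} d(w) ≤ d² + B`, `B ≤ dk` and `d + ∑_{w ∼ u} d(w) + B ≤ 2m`, and the bound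
follows from these by elementary algebra.
-/

open scoped Classical

open Finset Matrix

theorem Matrix.abs_le_of_mulVec_le_smul {ι : Type*} [Fintype ι] {Q : Matrix ι ι ℝ}
    (hQ : ∀ i j, 0 ≤ Q i j) {t : ι → ℝ} (ht : ∀ i, 0 < t i) {r : ℝ}
    (hr : ∀ i, (Q *ᵥ t) i ≤ r * t i) {f : ι → ℝ} (hf : f ≠ 0) {μ : ℝ}
    (hμ : Q *ᵥ f = μ • f) : |μ| ≤ r := by
  obtain ⟨j, hj⟩ := Function.ne_iff.mp hf
  obtain ⟨i, -, hi⟩ := exists_max_image univ (fun i => |f i| / t i) ⟨j, mem_univ j⟩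
  set s := |f i| / t i
  have hs : 0 < s := (div_pos (abs_pos.mpr hj) (ht j)).trans_le (hi j (mem_univ j))
  have hf_le : ∀ j, |f j| ≤ s * t j := fun j => (div_le_iff₀ (ht j)).mp (hi j (mem_univ j))
  have hfi : |f i| = s * t i := by simp only [s]; field_simp [(ht i).ne']
  have : |μ| * (s * t i) ≤ r * (s * t i) :=
    calc |μ| * (s * t i) = |(Q *ᵥ f) i| := by rw [hμ, Pi.smul_apply, smul_eq_mul, abs_mul, hfi]
      _ ≤ ∑ j, Q i j * |f j| := by
          simpa only [mulVec, dotProduct, abs_mul, abs_of_nonneg (hQ i _)]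
            using abs_sum_le_sum_abs (fun j => Q i j * f j) univ
      _ ≤ ∑ j, Q i j * (s * t j) :=
          sum_le_sum fun j _ => mul_le_mul_of_nonneg_left (hf_le j) (hQ i j)
      _ = s * (Q *ᵥ t) i := by
          simp only [mulVec, dotProduct, mul_sum]
          exact sum_congr rfl fun j _ => by ring
      _ ≤ s * (r * t i) := by gcongr; exact hr i
      _ = r * (s * t i) := by ring
  exact le_of_mul_le_mul_right this (mul_pos hs (ht i))

namespace SimpleGraph

variable {V : Type*} [Fintype V] [DecidableEq V] (G : SimpleGraph V) [DecidableRel G.Adj]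

def signlessLapMatrix (R : Type*) [AddMonoidWithOne R] : Matrix V V R :=
  G.degMatrix R + G.adjMatrix R

variable {G}

theorem signlessLapMatrix_mulVec_apply {R : Type*} [NonAssocSemiring R] (v : V) (x : V → R) :
    (G.signlessLapMatrix R *ᵥ x) v = G.degree v * x v + ∑ w ∈ G.neighborFinset v, x w := by
  rw [signlessLapMatrix, add_mulVec, Pi.add_apply, degMatrix_mulVec_apply, adjMatrix_mulVec_apply]

theorem signlessLapMatrix_nonneg {R : Type*} [Semiring R] [PartialOrder R] [IsOrderedRing R]
    (v w : V) : 0 ≤ G.signlessLapMatrix R v w := by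
  simp only [signlessLapMatrix, degMatrix, Matrix.add_apply, diagonal_apply, adjMatrix_apply]
  exact add_nonneg (by split_ifs <;> simp) (by split_ifs <;> simp)

variable (u : V)

theorem degree_le_degree_add_card_adj_compl {w : V} (hw : G.Adj u w) :
    G.degree w ≤ G.degree u + #{x ∈ Gᶜ.neighborFinset u | G.Adj w x} := by
  calc G.degree w
      ≤ #((insert u (G.neighborFinset u)).erase w ∪ {x ∈ Gᶜ.neighborFinset u | G.Adj w x}) := by
        refine card_le_card fun x hx => ?_
        rw [mem_neighborFinset] at hx
        simp only [mem_union, mem_erase, mem_insert, mem_filter, mem_neighborFinset, compl_adj]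
        have := hx.ne'
        by_cases hxu : x = u <;> by_cases hux : G.Adj u x <;> simp_all [eq_comm]
    _ ≤ _ := by
        refine (card_union_le _ _).trans (add_le_add_left ?_ _)
        rw [card_erase_of_mem (mem_insert_of_mem ((mem_neighborFinset ..).mpr hw)),
          card_insert_of_notMem (notMem_neighborFinset_self G u), card_neighborFinset_eq_degree]
        simp

theorem sum_degree_neighborFinset_le :
    ∑ w ∈ G.neighborFinset u, G.degree w ≤
      G.degree u * G.degree u +
        ∑ w ∈ G.neighborFinset u, #{x ∈ Gᶜ.neighborFinset u | G.Adj w x} := by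
  calc ∑ w ∈ G.neighborFinset u, G.degree w
      ≤ ∑ w ∈ G.neighborFinset u, (G.degree u + #{x ∈ Gᶜ.neighborFinset u | G.Adj w x}) :=
        sum_le_sum fun w hw => degree_le_degree_add_card_adj_compl u ((mem_neighborFinset ..).mp hw)
    _ = _ := by rw [sum_add_distrib, sum_const, card_neighborFinset_eq_degree, smul_eq_mul]

theorem sum_card_adj_compl_le :
    ∑ w ∈ G.neighborFinset u, #{x ∈ Gᶜ.neighborFinset u | G.Adj w x} ≤
      G.degree u * Gᶜ.degree u := by
  calc _ ≤ ∑ _w ∈ G.neighborFinset u, Gᶜ.degree u :=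
        sum_le_sum fun w _ => (card_filter_le _ _).trans (card_neighborFinset_eq_degree ..).le
    _ = _ := by rw [sum_const, card_neighborFinset_eq_degree, smul_eq_mul]

theorem degree_add_sum_degree_neighborFinset_add_sum_card_adj_compl_le :
    G.degree u + ∑ w ∈ G.neighborFinset u, G.degree w +
        ∑ w ∈ G.neighborFinset u, #{x ∈ Gᶜ.neighborFinset u | G.Adj w x} ≤
      2 * #G.edgeFinset := by
  have hcompl : Gᶜ.neighborFinset u = (insert u (G.neighborFinset u))ᶜ := by
    rw [neighborFinset_compl, compl_insert, sdiff_singleton_eq_erase]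
  have hfar : ∑ w ∈ G.neighborFinset u, #{x ∈ Gᶜ.neighborFinset u | G.Adj w x} ≤
      ∑ x ∈ Gᶜ.neighborFinset u, G.degree x := by
    rw [show ∑ w ∈ G.neighborFinset u, #{x ∈ Gᶜ.neighborFinset u | G.Adj w x} = _ from
      sum_card_bipartiteAbove_eq_sum_card_bipartiteBelow G.Adj]
    refine sum_le_sum fun x _ => ?_
    rw [← card_neighborFinset_eq_degree]
    exact card_le_card fun w hw => (mem_neighborFinset ..).mpr (mem_filter.mp hw).2.symm
  rw [← sum_degrees_eq_twice_card_edges, ← sum_add_sum_compl (insert u (G.neighborFinset u)),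
    sum_insert (notMem_neighborFinset_self G u), ← hcompl]
  omega

theorem sq_degree_add_sum_degree_neighborFinset_le (hV : 2 ≤ Fintype.card V) :
    (G.degree u : ℝ) ^ 2 + ∑ w ∈ G.neighborFinset u, (G.degree w : ℝ) ≤
      (2 * #G.edgeFinset / (Fintype.card V - 1 : ℝ) + Fintype.card V - 2) * G.degree u := by
  have hcard : G.degree u + Gᶜ.degree u + 1 = Fintype.card V := by
    have := G.degree_lt_card_verts u
    rw [degree_compl]
    omega
  set d := G.degree u
  set k := Gᶜ.degree u
  set S := ∑ w ∈ G.neighborFinset u, G.degree w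
  set B := ∑ w ∈ G.neighborFinset u, #{x ∈ Gᶜ.neighborFinset u | G.Adj w x}
  have hS : (S : ℝ) ≤ d * d + B := by exact_mod_cast sum_degree_neighborFinset_le u
  have hB : (B : ℝ) ≤ d * k := by exact_mod_cast sum_card_adj_compl_le u
  have hm : (d + S + B : ℝ) ≤ 2 * #G.edgeFinset := by
    exact_mod_cast degree_add_sum_degree_neighborFinset_add_sum_card_adj_compl_le u
  have hpos : (0 : ℝ) < d + k := by exact_mod_cast (show 0 < d + k by omega)
  have hd : (d : ℝ) ≤ d * d := by exact_mod_cast Nat.le_mul_self d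
  have hk : (k : ℝ) ≤ k * k := by exact_mod_cast Nat.le_mul_self k
  -- After `hm` and `hS` it remains to see `(k - d) B + d k (1 - k) ≤ 0`: use `B ≤ d k` if `d ≤ k`.
  have key : (d + k) * (d ^ 2 + S : ℝ) ≤ (2 * #G.edgeFinset + (d + k) * (d + k - 1)) * d := by
    have hdm := mul_le_mul_of_nonneg_left hm (Nat.cast_nonneg d : (0 : ℝ) ≤ d)
    have hkS := mul_le_mul_of_nonneg_left hS (Nat.cast_nonneg k : (0 : ℝ) ≤ k)
    rcases le_total (d : ℝ) k with hdk | hkd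
    · nlinarith [mul_le_mul_of_nonneg_left hB (sub_nonneg.mpr hdk),
        (Nat.cast_nonneg k : (0 : ℝ) ≤ k)]
    · nlinarith [mul_nonneg (sub_nonneg.mpr hkd) (Nat.cast_nonneg B : (0 : ℝ) ≤ B),
        (Nat.cast_nonneg d : (0 : ℝ) ≤ d)]
  have hn : (Fintype.card V : ℝ) = d + k + 1 := by exact_mod_cast hcard.symm
  rw [hn, show 2 * (#G.edgeFinset : ℝ) / (d + k + 1 - 1) + (d + k + 1) - 2 =
      (2 * #G.edgeFinset + (d + k) * (d + k - 1)) / (d + k) by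
      rw [add_sub_cancel_right]; field_simp [hpos.ne']; ring,
    div_mul_eq_mul_div, le_div_iff₀ hpos, ← Nat.cast_sum]
  linarith

variable (G) in
theorem abs_le_of_signlessLapMatrix_mulVec_eq_smul {r : ℝ} (hr0 : 0 ≤ r)
    (hr : ∀ u, (G.degree u : ℝ) ^ 2 + ∑ w ∈ G.neighborFinset u, (G.degree w : ℝ) ≤ r * G.degree u)
    {f : V → ℝ} (hf : f ≠ 0) {μ : ℝ} (hμ : G.signlessLapMatrix ℝ *ᵥ f = μ • f) : |μ| ≤ r := by
  refine le_of_forall_pos_le_add fun ε hε => ?_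
  refine Matrix.abs_le_of_mulVec_le_smul signlessLapMatrix_nonneg
    (t := fun v => G.degree v + ε / 2) (fun v => by positivity) (fun u => ?_) hf hμ
  calc (G.signlessLapMatrix ℝ *ᵥ fun v => (G.degree v : ℝ) + ε / 2) u
      = (G.degree u : ℝ) ^ 2 + ∑ w ∈ G.neighborFinset u, (G.degree w : ℝ) + ε * G.degree u := by
        rw [signlessLapMatrix_mulVec_apply, sum_add_distrib, sum_const,
          card_neighborFinset_eq_degree, nsmul_eq_mul]
        ring
    _ ≤ (r + ε) * (G.degree u + ε / 2) := by nlinarith [hr u, mul_nonneg hr0 hε.le]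

end SimpleGraph

/-- For a graph of order n ≥ 2 with m edges, the signless Laplacian spectral radius
satisfies γ(G) ≤ 2m/(n-1) + n - 2. -/
theorem signless_laplacian_radius_bound (n : ℕ) (hn : 2 ≤ n) (G : SimpleGraph (Fin n)) (γ : ℝ)
    (hγ : IsGreatest {x : ℝ | ∃ f : Fin n → ℝ, f ≠ 0 ∧
      (Matrix.diagonal (fun v => (G.degree v : ℝ)) + G.adjMatrix ℝ).mulVec f = x • f} γ) :
    γ ≤ 2 * (G.edgeFinset.card : ℝ) / ((n : ℝ) - 1) + (n : ℝ) - 2 := by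
  obtain ⟨⟨f, hf, hfγ⟩, -⟩ := hγ
  have hn' : (2 : ℝ) ≤ n := by exact_mod_cast hn
  have hr0 : 0 ≤ 2 * (G.edgeFinset.card : ℝ) / ((n : ℝ) - 1) + (n : ℝ) - 2 := by
    have : 0 ≤ 2 * (G.edgeFinset.card : ℝ) / ((n : ℝ) - 1) :=
      div_nonneg (by positivity) (by linarith)
    linarith
  have hdeg := G.sq_degree_add_sum_degree_neighborFinset_le (hV := by rwa [Fintype.card_fin])
  rw [Fintype.card_fin] at hdeg
  exact (le_abs_self γ).trans (G.abs_le_of_signlessLapMatrix_mulVec_eq_smul hr0 hdeg hf hfγ)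
end
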